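/- For exchangeable residuals $e_1,\dots,e_{n+1}$ and the order-statistic threshold $\hat q$ equal to the $k$-th smallest of $e_1,\dots,e_n$, the miscoverage satisfies $\mathbb{P}[e_{n+1} > \hat q] \le \frac{n+1-k}{n+1}$. -/

import Mathlib

open MeasureTheory ProbabilityTheory
open scoped ENNReal

/-- The `k`-th smallest element of a list of reals (1-indexed). -/
noncomputable def orderStat (l : List ℝ) (k : ℕ) : ℝ :=
  (l.insertionSort (· ≤ ·)).getD (k - 1) 0

/-- A finite family of real random variables is exchangeable if its joint law
is invariant under permutations of the indices. -/
def Exchangeable {Ω : Type*} [MeasureSpace Ω] {m : ℕ} (e : Fin m → Ω → ℝ) : Prop :=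
  ∀ σ : Equiv.Perm (Fin m),
    Measure.map (fun ω => fun i => e (σ i) ω) (ℙ : Measure Ω) =
      Measure.map (fun ω => fun i => e i ω) (ℙ : Measure Ω)

/-! The event `q̂ < e (last n)` says that at least `k` residuals lie strictly below the last one,
i.e. that the strict rank of the last index among all `n + 1` is at least `k`. By exchangeability
every index has strict rank `≥ k` with the same probability. For fixed values, at most `n + 1 - k`
indices have strict rank `≥ k`: the `k` indices with values strictly below the least value among
them lie outside this set. Summing over indices gives `(n + 1) ℙ ≤ n + 1 - k`. Counting strictly
smaller values makes ties harmless, so no continuity of the law is needed. -/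

open Finset

theorem List.countP_ofFn {α : Type*} {m : ℕ} (f : Fin m → α) (p : α → Prop)
    [DecidablePred p] :
    (List.ofFn f).countP (fun a => decide (p a)) = #{i | p (f i)} := by
  rw [List.ofFn_eq_map, List.countP_map, Fin.univ_def, List.countP_eq_length_filter]
  rfl

theorem List.Pairwise.getElem_lt_iff_lt_countP {α : Type*} [LinearOrder α] {l : List α}
    (hl : l.Pairwise (· ≤ ·)) (x : α) {i : ℕ} (hi : i < l.length) :
    l[i] < x ↔ i < l.countP (· < x) := by
  induction l generalizing i with
  | nil => simp at hi
  | cons a t ih =>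
    obtain ⟨ha_le, ht⟩ := List.pairwise_cons.1 hl
    by_cases hax : a < x
    · rcases i with _ | i
      · simp [hax]
      · simp [hax, ih ht (Nat.lt_of_succ_lt_succ hi)]
    · have hxa : x ≤ a := not_lt.1 hax
      have hge : ∀ b ∈ a :: t, x ≤ b :=
        List.forall_mem_cons.2 ⟨hxa, fun b hb => hxa.trans (ha_le b hb)⟩
      have hzero : (a :: t).countP (· < x) = 0 :=
        List.countP_eq_zero.2 fun b hb => by simpa using hge b hb
      simpa [hzero] using hge _ (List.getElem_mem hi)

theorem orderStat_lt_iff {l : List ℝ} {k : ℕ} (hk1 : 1 ≤ k) (hkl : k ≤ l.length) (x : ℝ) :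
    orderStat l k < x ↔ k ≤ l.countP (· < x) := by
  have hperm := List.perm_insertionSort (· ≤ ·) l
  have hlt : k - 1 < (l.insertionSort (· ≤ ·)).length := by rw [hperm.length_eq]; omega
  rw [orderStat, List.getD_eq_getElem _ _ hlt,
    (List.pairwise_insertionSort _ l).getElem_lt_iff_lt_countP x hlt, hperm.countP_eq]
  omega

section StrictRank

variable {ι α : Type*} [Fintype ι] [LinearOrder α]

def strictRank (x : ι → α) (j : ι) : ℕ := #{i | x i < x j}

theorem strictRank_comp_perm (x : ι → α) (σ : Equiv.Perm ι) (j : ι) :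
    strictRank (x ∘ σ) j = strictRank x (σ j) :=
  Finset.card_equiv σ (by simp)

theorem card_strictRank_ge_le (x : ι → α) (k : ℕ) :
    #{j | k ≤ strictRank x j} ≤ Fintype.card ι - k := by
  set S : Finset ι := {j | k ≤ strictRank x j}
  rcases S.eq_empty_or_nonempty with hS | hS
  · simp [hS]
  obtain ⟨j₀, hj₀, hmin⟩ := S.exists_min_image x hS
  have hdisj : Disjoint ({i | x i < x j₀} : Finset ι) S :=
    Finset.disjoint_left.2 fun i hi hiS => (hmin i hiS).not_gt (Finset.mem_filter.1 hi).2
  have hk : k ≤ #({i | x i < x j₀} : Finset ι) := (Finset.mem_filter.1 hj₀).2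
  have := Finset.card_disjUnion _ _ hdisj ▸ Finset.card_le_univ (Finset.disjUnion _ S hdisj)
  omega

theorem strictRank_last_eq_countP {n : ℕ} (x : Fin (n + 1) → α) :
    strictRank x (Fin.last n) =
      (List.ofFn fun i : Fin n => x i.castSucc).countP (· < x (Fin.last n)) := by
  have := List.countP_ofFn x (· < x (Fin.last n))
  rw [List.ofFn_succ', List.concat_eq_append, List.countP_append] at this
  simpa [strictRank] using this.symm

end StrictRank

theorem measurable_strictRank {ι : Type*} [Fintype ι] (j : ι) :
    Measurable fun x : ι → ℝ => strictRank x j := by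
  simp only [strictRank, Finset.card_filter]
  exact Finset.measurable_sum _ fun i _ =>
    Measurable.ite (measurableSet_lt (measurable_pi_apply i) (measurable_pi_apply j))
      measurable_const measurable_const

theorem Exchangeable.measure_preimage_perm {Ω : Type*} [MeasureSpace Ω] {m : ℕ}
    {e : Fin m → Ω → ℝ} (hexch : Exchangeable e) (hmeas : ∀ i, Measurable (e i))
    (σ : Equiv.Perm (Fin m)) {B : Set (Fin m → ℝ)} (hB : MeasurableSet B) :
    ℙ ((fun ω i => e (σ i) ω) ⁻¹' B) = ℙ ((fun ω i => e i ω) ⁻¹' B) := by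
  rw [← Measure.map_apply (measurable_pi_lambda _ fun i => hmeas (σ i)) hB, hexch σ,
    Measure.map_apply (measurable_pi_lambda _ hmeas) hB]

theorem Exchangeable.measure_strictRank_ge_eq {Ω : Type*} [MeasureSpace Ω] {m : ℕ}
    {e : Fin m → Ω → ℝ} (hexch : Exchangeable e) (hmeas : ∀ i, Measurable (e i))
    (k : ℕ) (j j' : Fin m) :
    ℙ {ω | k ≤ strictRank (fun i => e i ω) j} =
      ℙ {ω | k ≤ strictRank (fun i => e i ω) j'} := by
  have hpre : {ω | k ≤ strictRank (fun i => e i ω) j'} =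
      (fun ω i => e (Equiv.swap j j' i) ω) ⁻¹' {x | k ≤ strictRank x j} := by
    ext ω
    change k ≤ _ ↔ k ≤ strictRank ((fun i => e i ω) ∘ Equiv.swap j j') j
    rw [strictRank_comp_perm, Equiv.swap_apply_left]
  have hB : MeasurableSet {x : Fin m → ℝ | k ≤ strictRank x j} :=
    measurable_strictRank j measurableSet_Ici
  rw [hpre, hexch.measure_preimage_perm hmeas _ hB]
  rfl

theorem sum_measure_le_of_forall_card_mem_le {Ω ι : Type*} [MeasurableSpace Ω] [Fintype ι]
    (μ : Measure Ω) {A : ι → Set Ω} [∀ ω j, Decidable (ω ∈ A j)]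
    (hA : ∀ j, MeasurableSet (A j)) {N : ℕ} (hN : ∀ ω, #{j | ω ∈ A j} ≤ N) :
    ∑ j, μ (A j) ≤ N * μ Set.univ := by
  have hcount (ω : Ω) : ∑ j, (A j).indicator 1 ω = (#{j | ω ∈ A j} : ℝ≥0∞) := by
    simp [Set.indicator_apply]
  calc ∑ j, μ (A j) = ∫⁻ ω, ∑ j, (A j).indicator 1 ω ∂μ := by
        rw [lintegral_finsetSum _ fun j _ => measurable_one.indicator (hA j)]
        simp only [lintegral_indicator_one (hA _)]
    _ ≤ ∫⁻ _, (N : ℝ≥0∞) ∂μ :=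
        lintegral_mono fun ω => hcount ω ▸ Nat.cast_le.2 (hN ω)
    _ = N * μ Set.univ := lintegral_const _

/-- General form of the conformal bound: for exchangeable residuals
`e 0, …, e n` and `q̂` the `k`-th smallest of the first `n` of them, the
miscoverage probability is at most `(n + 1 - k)/(n + 1)`. -/
theorem conformal_miscoverage_bound
    {Ω : Type*} [MeasureSpace Ω] [IsProbabilityMeasure (ℙ : Measure Ω)]
    {n : ℕ}
    (e : Fin (n + 1) → Ω → ℝ) (hmeas : ∀ i, Measurable (e i))
    (hexch : Exchangeable e)
    (k : ℕ) (hk1 : 1 ≤ k) (hkn : k ≤ n)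
    (qhat : Ω → ℝ)
    (hq : ∀ ω, qhat ω = orderStat (List.ofFn (fun i : Fin n => e i.castSucc ω)) k) :
    ℙ {ω | qhat ω < e (Fin.last n) ω} ≤
      ((n + 1 - k : ℕ) : ℝ≥0∞) / ((n : ℝ≥0∞) + 1) := by
  set A : Fin (n + 1) → Set Ω := fun j => {ω | k ≤ strictRank (fun i => e i ω) j}
  have hA : ∀ j, MeasurableSet (A j) := fun j =>
    (measurable_strictRank j).comp (measurable_pi_lambda _ hmeas) measurableSet_Ici
  have htarget : {ω | qhat ω < e (Fin.last n) ω} = A (Fin.last n) := by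
    ext ω
    simp only [Set.mem_ofPred_eq, A, hq, strictRank_last_eq_countP]
    exact orderStat_lt_iff hk1 (by simpa using hkn) _
  have hsum : ∑ j, ℙ (A j) ≤ (n + 1 - k : ℕ) := by
    simpa only [measure_univ, mul_one] using
      sum_measure_le_of_forall_card_mem_le (N := n + 1 - k) ℙ hA fun ω =>
        (card_strictRank_ge_le (fun i => e i ω) k).trans_eq (by rw [Fintype.card_fin])
  have hequal : ∀ j, ℙ (A j) = ℙ (A (Fin.last n)) := fun j =>
    hexch.measure_strictRank_ge_eq hmeas k j (Fin.last n)
  simp only [hequal, Finset.sum_const, Finset.card_univ, Fintype.card_fin, nsmul_eq_mul] at hsum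
  rw [htarget, ENNReal.le_div_iff_mul_le (by simp) (by simp), mul_comm]
  exact_mod_cast hsum
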